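/- Let n ≥ 1 and let x, jxx, w_c be real. Define the restricted single-clique Hamiltonian H̄ = Π(-x S_X + jxx S_XX - w_c S_Z̃)Π and set w_eff = w_c - ((n-1)/4)·jxx. Then: (i) for every vector c = Σᵢ cᵢ e_{i} in the span of the singleton states with Σᵢ cᵢ = 0, H̄ c = -(w_c + jxx/4) c; (ii) H̄ u = -w_eff·u - (√n·x/2)·e_∅ and H̄ e_∅ = -(√n·x/2)·u, i.e., the matrix of H̄ in the ordered basis (u, e_∅) equals the basic matrix B(w_eff, √n·x), which is the real symmetric 2×2 matrix with rows (-w_eff, -√n·x/2) and (-√n·x/2, 0). -/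

import Mathlib

open scoped InnerProductSpace
noncomputable section

/-- The Hilbert space of an `n`-vertex clique: orthonormal basis indexed by
subsets of `Fin n` (Boolean strings of length `n`). -/
abbrev CliqueSpace (n : ℕ) := EuclideanSpace ℂ (Finset (Fin n))

/-- The computational basis vector `e_S` for a subset `S`. -/
def basisVec {n : ℕ} (S : Finset (Fin n)) : CliqueSpace n :=
  EuclideanSpace.single S 1

/-- The bit-flip operator `σᵢˣ`, permuting basis vectors by flipping the `i`-th bit. -/
def sigmaX {n : ℕ} (i : Fin n) : CliqueSpace n →ₗ[ℂ] CliqueSpace n where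
  toFun ψ := WithLp.toLp 2 (fun S => ψ (symmDiff S {i}))
  map_add' _ _ := rfl
  map_smul' _ _ := rfl

/-- The total transverse-field operator `S_X = (1/2) Σᵢ σᵢˣ`. -/
def SX (n : ℕ) : CliqueSpace n →ₗ[ℂ] CliqueSpace n :=
  (1/2 : ℂ) • ∑ i : Fin n, sigmaX i

/-- The clique XX-driver `S_XX = (1/4) Σ_{i<j} σᵢˣ σⱼˣ`. -/
def SXX (n : ℕ) : CliqueSpace n →ₗ[ℂ] CliqueSpace n :=
  (1/4 : ℂ) • ∑ i : Fin n, ∑ j : Fin n,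
    if i < j then (sigmaX i) ∘ₗ (sigmaX j) else 0

/-- The diagonal operator `S_Z̃` with `S_Z̃ e_S = |S| e_S`. -/
def SZt (n : ℕ) : CliqueSpace n →ₗ[ℂ] CliqueSpace n where
  toFun ψ := WithLp.toLp 2 (fun S => (S.card : ℂ) * ψ S)
  map_add' ψ φ := WithLp.ofLp_injective 2 <| funext fun S => mul_add _ (ψ S) (φ S)
  map_smul' c ψ := WithLp.ofLp_injective 2 <| funext fun S => by
    show (S.card : ℂ) * (c * ψ S) = c * ((S.card : ℂ) * ψ S); ring

/-- The low-energy subspace `𝓛`, spanned by the empty-set state and the singleton states. -/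
def lowSub (n : ℕ) : Submodule ℂ (CliqueSpace n) :=
  Submodule.span ℂ ({basisVec ∅} ∪ Set.range fun i : Fin n => basisVec {i})

/-- The orthogonal projection `Π` onto the low-energy subspace, as an endomorphism. -/
def projLow (n : ℕ) : CliqueSpace n →ₗ[ℂ] CliqueSpace n :=
  (lowSub n).subtype ∘ₗ (Submodule.orthogonalProjectionOnto (lowSub n)).toLinearMap

/-- The uniform superposition `u = (1/√n) Σᵢ e_{i}` of the singleton states. -/
def uniformState (n : ℕ) : CliqueSpace n :=
  ((Real.sqrt n : ℂ))⁻¹ • ∑ i : Fin n, basisVec {i}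

/-- The restricted single-clique Hamiltonian `H̄ = Π(-x S_X + jxx S_XX - w_c S_Z̃)Π`. -/
def Hbar (n : ℕ) (x jxx wc : ℝ) : CliqueSpace n →ₗ[ℂ] CliqueSpace n :=
  projLow n ∘ₗ (-(x : ℂ) • SX n + (jxx : ℂ) • SXX n - (wc : ℂ) • SZt n) ∘ₗ projLow n

/-- The effective weight `w_eff = w_c - ((n-1)/4)·jxx`. -/
def wEff (n : ℕ) (wc jxx : ℝ) : ℝ := wc - ((n : ℝ) - 1) / 4 * jxx

-- lemma layer 1
lemma sigmaX_basis {n : ℕ} (i : Fin n) (S : Finset (Fin n)) :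
    sigmaX i (basisVec S) = basisVec (symmDiff S {i}) := by
  ext T
  show (basisVec S) (symmDiff T {i}) = _
  simp only [basisVec, EuclideanSpace.single_apply]
  congr 1
  simp only [eq_iff_iff]
  constructor
  · rintro rfl; rw [symmDiff_symmDiff_cancel_right]
  · rintro rfl; rw [symmDiff_symmDiff_cancel_right]

lemma SZt_basis {n : ℕ} (S : Finset (Fin n)) :
    SZt n (basisVec S) = (S.card : ℂ) • basisVec S := by
  ext T
  show (T.card : ℂ) * (basisVec S) T = _
  simp only [basisVec, PiLp.smul_apply, EuclideanSpace.single_apply, smul_eq_mul]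
  split_ifs with h
  · subst h; ring
  · ring

lemma mem_low_empty (n : ℕ) : basisVec (∅ : Finset (Fin n)) ∈ lowSub n :=
  Submodule.subset_span (Or.inl rfl)

lemma mem_low_single {n : ℕ} (i : Fin n) : basisVec {i} ∈ lowSub n :=
  Submodule.subset_span (Or.inr ⟨i, rfl⟩)

lemma projLow_of_mem {n : ℕ} {v : CliqueSpace n} (hv : v ∈ lowSub n) :
    projLow n v = v := by
  simp [projLow, Submodule.starProjection_eq_self_iff.mpr, Submodule.orthogonalProjectionOnto_mem_subspace_eq_self ⟨v, hv⟩]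

lemma inner_basis {n : ℕ} (S T : Finset (Fin n)) :
    ⟪basisVec S, basisVec T⟫_ℂ = if S = T then 1 else 0 := by
  simp [basisVec, EuclideanSpace.inner_single_left, EuclideanSpace.single_apply, eq_comm]

lemma projLow_perp {n : ℕ} {S : Finset (Fin n)} {a b : Fin n}
    (ha : a ∈ S) (hb : b ∈ S) (hab : a ≠ b) :
    projLow n (basisVec S) = 0 := by
  have hS : basisVec S ∈ (lowSub n)ᗮ := by
    rw [lowSub, Submodule.mem_orthogonal]
    intro u hu
    induction hu using Submodule.span_induction with
    | mem y hy =>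
      rcases hy with hy | ⟨i, rfl⟩
      · rw [Set.mem_singleton_iff] at hy; subst hy
        rw [inner_basis, if_neg]
        rintro rfl; exact absurd ha (Finset.notMem_empty a)
      · rw [inner_basis, if_neg]
        rintro rfl
        rw [Finset.mem_singleton] at ha hb
        exact hab (ha.trans hb.symm)
    | zero => simp
    | add _ _ _ _ h1 h2 => simp [inner_add_left, h1, h2]
    | smul c _ _ h => simp [inner_smul_left, h]
  simp [projLow, Submodule.orthogonalProjectionOnto_apply_of_mem_orthogonal hS]
lemma empty_symmDiff' {n : ℕ} (s : Finset (Fin n)) : symmDiff ∅ s = s := by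
  rw [← Finset.bot_eq_empty, bot_symmDiff]

lemma projLow_SX_empty (n : ℕ) :
    projLow n (SX n (basisVec ∅)) = (1/2 : ℂ) • ∑ i : Fin n, basisVec {i} := by
  rw [SX, LinearMap.smul_apply, LinearMap.sum_apply, map_smul, map_sum]
  congr 1
  refine Finset.sum_congr rfl fun i _ => ?_
  rw [sigmaX_basis, empty_symmDiff', projLow_of_mem (mem_low_single i)]

lemma projLow_SX_single {n : ℕ} (k : Fin n) :
    projLow n (SX n (basisVec {k})) = (1/2 : ℂ) • basisVec ∅ := by
  rw [SX, LinearMap.smul_apply, LinearMap.sum_apply, map_smul, map_sum]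
  congr 1
  rw [Finset.sum_eq_single k]
  · rw [sigmaX_basis, symmDiff_self, Finset.bot_eq_empty, projLow_of_mem (mem_low_empty n)]
  · intro i _ hik
    rw [sigmaX_basis]
    refine projLow_perp (a := k) (b := i) ?_ ?_ (Ne.symm hik)
    · simp only [Finset.mem_symmDiff, Finset.mem_singleton]
      exact Or.inl ⟨trivial, fun h => hik h.symm⟩
    · simp only [Finset.mem_symmDiff, Finset.mem_singleton]
      exact Or.inr ⟨trivial, hik⟩
  · intro h; exact absurd (Finset.mem_univ k) h

lemma projLow_SXX_empty (n : ℕ) :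
    projLow n (SXX n (basisVec ∅)) = 0 := by
  rw [SXX, LinearMap.smul_apply, LinearMap.sum_apply, map_smul, map_sum]
  rw [Finset.sum_eq_zero, smul_zero]
  intro i _
  rw [LinearMap.sum_apply, map_sum, Finset.sum_eq_zero]
  intro j _
  rw [apply_ite (fun f : CliqueSpace n →ₗ[ℂ] CliqueSpace n => f (basisVec ∅))]
  split_ifs with hij
  · rw [LinearMap.comp_apply, sigmaX_basis, empty_symmDiff', sigmaX_basis]
    refine projLow_perp (a := i) (b := j) ?_ ?_ (ne_of_lt hij)
    · simp only [Finset.mem_symmDiff, Finset.mem_singleton]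
      exact Or.inr ⟨trivial, (ne_of_lt hij)⟩
    · simp only [Finset.mem_symmDiff, Finset.mem_singleton]
      exact Or.inl ⟨trivial, (ne_of_lt hij).symm⟩
  · simp
lemma projLow_SXX_single {n : ℕ} (k : Fin n) :
    projLow n (SXX n (basisVec {k}))
      = (1/4 : ℂ) • ((∑ i : Fin n, basisVec {i}) - basisVec {k}) := by
  rw [SXX, LinearMap.smul_apply, LinearMap.sum_apply, map_smul, map_sum]
  congr 1
  simp only [LinearMap.sum_apply, map_sum]
  have hterm : ∀ i j : Fin n,
      projLow n ((if i < j then (sigmaX i) ∘ₗ (sigmaX j) else 0) (basisVec {k}))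
        = (if j = k ∧ i < k then basisVec {i} else 0)
          + (if i = k ∧ k < j then basisVec {j} else 0) := by
    intro i j
    rw [apply_ite (fun f : CliqueSpace n →ₗ[ℂ] CliqueSpace n => f (basisVec {k}))]
    by_cases hij : i < j
    · rw [if_pos hij, LinearMap.comp_apply, sigmaX_basis, sigmaX_basis]
      by_cases hjk : j = k
      · subst hjk
        rw [symmDiff_self, Finset.bot_eq_empty, empty_symmDiff',
          projLow_of_mem (mem_low_single i), if_pos ⟨rfl, hij⟩, if_neg, add_zero]
        rintro ⟨rfl, -⟩; exact absurd hij (lt_irrefl _)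
      · by_cases hik : i = k
        · subst hik
          have hs : symmDiff (symmDiff ({i} : Finset (Fin n)) {j}) {i} = {j} := by
            rw [symmDiff_comm ({i} : Finset (Fin n)) {j}, symmDiff_symmDiff_cancel_right]
          rw [hs, projLow_of_mem (mem_low_single j), if_neg, if_pos ⟨rfl, hij⟩, zero_add]
          rintro ⟨h, -⟩; exact hjk h
        · have hne : i ≠ j := ne_of_lt hij
          have hi : i ∈ symmDiff (symmDiff ({k} : Finset (Fin n)) {j}) {i} := by
            simp only [Finset.mem_symmDiff, Finset.mem_singleton]
            exact Or.inr ⟨trivial, fun h => (h.elim (fun ⟨h1, _⟩ => hik h1) (fun ⟨h1, _⟩ => hne h1))⟩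
          have hj : j ∈ symmDiff (symmDiff ({k} : Finset (Fin n)) {j}) {i} := by
            simp only [Finset.mem_symmDiff, Finset.mem_singleton]
            exact Or.inl ⟨Or.inr ⟨trivial, hjk⟩, hne.symm⟩
          rw [projLow_perp hi hj hne, if_neg, if_neg, add_zero]
          · rintro ⟨h, -⟩; exact hik h
          · rintro ⟨h, -⟩; exact hjk h
    · rw [if_neg hij, LinearMap.zero_apply, map_zero, if_neg, if_neg, add_zero]
      · rintro ⟨rfl, h⟩; exact hij h
      · rintro ⟨rfl, h⟩; exact hij h
  calc ∑ i : Fin n, ∑ j : Fin n,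
        projLow n ((if i < j then (sigmaX i) ∘ₗ (sigmaX j) else 0) (basisVec {k}))
      = ∑ i : Fin n, ∑ j : Fin n,
          ((if j = k ∧ i < k then basisVec {i} else 0)
            + (if i = k ∧ k < j then basisVec {j} else 0)) := by
        exact Finset.sum_congr rfl fun i _ => Finset.sum_congr rfl fun j _ => hterm i j
    _ = (∑ i : Fin n, if i < k then basisVec {i} else 0)
          + ∑ j : Fin n, if k < j then basisVec {j} else 0 := by
        simp only [Finset.sum_add_distrib]
        congr 1
        · refine Finset.sum_congr rfl fun i _ => ?_
          simp only [ite_and, Finset.sum_ite_eq', Finset.mem_univ, if_true]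
        · rw [Finset.sum_comm]
          refine Finset.sum_congr rfl fun j _ => ?_
          simp only [ite_and, Finset.sum_ite_eq', Finset.mem_univ, if_true]
    _ = (∑ i : Fin n, basisVec {i}) - basisVec {k} := by
        rw [← Finset.sum_add_distrib]
        have hpt : ∀ i : Fin n,
            ((if i < k then basisVec {i} else 0) + if k < i then basisVec {i} else 0)
              = basisVec {i} - (if i = k then basisVec {i} else 0) := by
          intro i
          rcases lt_trichotomy i k with h | h | h
          · rw [if_pos h, if_neg (asymm h), if_neg (ne_of_lt h), add_zero, sub_zero]
          · subst h
            rw [if_neg (lt_irrefl _), if_pos rfl, add_zero, sub_self]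
          · rw [if_neg (asymm h), if_pos h, if_neg (ne_of_gt h), zero_add, sub_zero]
        rw [Finset.sum_congr rfl fun i _ => hpt i, Finset.sum_sub_distrib,
          Finset.sum_ite_eq' Finset.univ k, if_pos (Finset.mem_univ k)]
lemma Hbar_empty (n : ℕ) (x jxx wc : ℝ) :
    Hbar n x jxx wc (basisVec ∅) = (-(x:ℂ)/2) • ∑ i : Fin n, basisVec {i} := by
  rw [Hbar, LinearMap.comp_apply, LinearMap.comp_apply, projLow_of_mem (mem_low_empty n)]
  simp only [LinearMap.sub_apply, LinearMap.add_apply, LinearMap.smul_apply]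
  rw [map_sub, map_add, map_smul, map_smul, map_smul,
      projLow_SX_empty, projLow_SXX_empty, SZt_basis]
  simp only [Finset.card_empty, Nat.cast_zero, zero_smul, map_zero, smul_zero, sub_zero, add_zero]
  rw [smul_smul]
  module

lemma Hbar_single {n : ℕ} (x jxx wc : ℝ) (k : Fin n) :
    Hbar n x jxx wc (basisVec {k})
      = (-(x:ℂ)/2) • basisVec ∅
        + ((jxx:ℂ)/4) • ((∑ i : Fin n, basisVec {i}) - basisVec {k})
        - (wc:ℂ) • basisVec {k} := by
  rw [Hbar, LinearMap.comp_apply, LinearMap.comp_apply, projLow_of_mem (mem_low_single k)]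
  simp only [LinearMap.sub_apply, LinearMap.add_apply, LinearMap.smul_apply]
  rw [map_sub, map_add, map_smul, map_smul, map_smul,
      projLow_SX_single, projLow_SXX_single, SZt_basis]
  simp only [Finset.card_singleton, Nat.cast_one, one_smul,
    projLow_of_mem (mem_low_single k)]
  rw [smul_smul, smul_smul]
  module
lemma Hbar_sum (n : ℕ) (x jxx wc : ℝ) (c : Fin n → ℂ) :
    Hbar n x jxx wc (∑ i, c i • basisVec {i})
      = ((-(x:ℂ)/2) * ∑ i, c i) • basisVec ∅
        + ((∑ i, c i) * ((jxx:ℂ)/4)) • (∑ m : Fin n, basisVec {m})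
        - ((jxx:ℂ)/4) • (∑ i, c i • basisVec {i})
        - (wc:ℂ) • (∑ i, c i • basisVec {i}) := by
  rw [map_sum]
  have h1 : ∀ i : Fin n, Hbar n x jxx wc (c i • basisVec {i})
      = c i • ((-(x:ℂ)/2) • basisVec ∅)
        + (c i * ((jxx:ℂ)/4)) • (∑ m : Fin n, basisVec {m})
        - ((jxx:ℂ)/4) • (c i • basisVec {i})
        - (wc:ℂ) • (c i • basisVec {i}) := by
    intro i
    rw [map_smul, Hbar_single]
    module
  rw [Finset.sum_congr rfl fun i _ => h1 i]
  simp only [Finset.sum_sub_distrib, Finset.sum_add_distrib, ← Finset.smul_sum,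
    ← Finset.sum_smul, ← Finset.sum_mul]
  module


/-- (i) On vectors `c = Σᵢ cᵢ e_{i}` with `Σᵢ cᵢ = 0`, `H̄ c = -(w_c + jxx/4) c`;
(ii) `H̄ u = -w_eff·u - (√n·x/2)·e_∅` and `H̄ e_∅ = -(√n·x/2)·u`, i.e. the matrix of
`H̄` in the ordered basis `(u, e_∅)` is the basic matrix `B(w_eff, √n·x)` with rows
`(-w_eff, -√n·x/2)` and `(-√n·x/2, 0)`. -/
theorem stmt6 (n : ℕ) (hn : 1 ≤ n) (x jxx wc : ℝ) :
    (∀ c : Fin n → ℂ, (∑ i, c i = 0) →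
      Hbar n x jxx wc (∑ i, c i • basisVec {i})
        = (-((wc : ℂ) + (jxx : ℂ) / 4)) • (∑ i, c i • basisVec {i})) ∧
    Hbar n x jxx wc (uniformState n)
      = (-(wEff n wc jxx : ℝ) : ℂ) • uniformState n
        + ((-(Real.sqrt n * x / 2) : ℝ) : ℂ) • basisVec ∅ ∧
    Hbar n x jxx wc (basisVec ∅)
      = ((-(Real.sqrt n * x / 2) : ℝ) : ℂ) • uniformState n := by
  have hs0 : (0:ℝ) < Real.sqrt n := Real.sqrt_pos.mpr (by exact_mod_cast Nat.lt_of_lt_of_le Nat.zero_lt_one hn)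
  have hs : ((Real.sqrt n : ℝ) : ℂ) ≠ 0 := by exact_mod_cast ne_of_gt hs0
  have hn2 : ((n:ℂ)) = ((Real.sqrt n : ℝ) : ℂ) * ((Real.sqrt n : ℝ) : ℂ) := by
    exact_mod_cast (Real.mul_self_sqrt (Nat.cast_nonneg n)).symm
  have hT : Hbar n x jxx wc (∑ i : Fin n, basisVec {i})
      = ((-(x:ℂ)/2) * n) • basisVec ∅
        + ((n:ℂ) * ((jxx:ℂ)/4) - (jxx:ℂ)/4 - wc) • ∑ m : Fin n, basisVec {m} := by
    have h := Hbar_sum n x jxx wc (fun _ => 1)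
    simp only [one_smul, Finset.sum_const, Finset.card_univ, Fintype.card_fin,
      nsmul_eq_mul, mul_one] at h
    rw [h]
    module
  refine ⟨fun c hc => ?_, ?_, ?_⟩
  · rw [Hbar_sum, hc]
    module
  · rw [uniformState, map_smul, hT]
    match_scalars
    all_goals push_cast [wEff]
    all_goals field_simp
    all_goals try ring
    all_goals try linear_combination (2*(x:ℂ))*hn2
    all_goals try linear_combination (x:ℂ)*hn2
    all_goals try linear_combination hn2
    all_goals try linear_combination (-(x:ℂ))*hn2
  · rw [Hbar_empty, uniformState]
    match_scalars
    push_cast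
    field_simp
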